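/- arXiv:2107.00074 — 2 statements merged into one kernel-verified Lean document; each statement's English description precedes it below -/
import Mathlib

section
/- Let A ∈ ℝ^{p×d} with columns a₁, …, a_d, Γ ∈ ℝ^{d×q} with rows γ₁ᵀ, …, γ_dᵀ, J ∈ ℝ^{q×q} symmetric positive semidefinite, and ξ ≥ 0. Fix j ∈ {1, …, d} and assume both Q = ΓᵀΓ + ξJ and Q − γ_jγ_jᵀ are positive definite. Let B̂ = AΓQ⁻¹ be the full-data penalized least squares fit, let B̂_{(j)} be the unique minimizer over B ∈ ℝ^{p×q} of Σ_{k≠j} ‖a_k − Bγ_k‖² + ξ tr(BᵀBJ), and let h_{jj} = γ_jᵀQ⁻¹γ_j. Then h_{jj} < 1 and a_j − B̂_{(j)}γ_j = (a_j − B̂γ_j)/(1 − h_{jj}). -/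
open Matrix

/-- Outer product applied to a vector. -/
lemma vmv_mulVec {p q : ℕ} (u : Fin p → ℝ) (v x : Fin q → ℝ) :
    Matrix.vecMulVec u v *ᵥ x = (v ⬝ᵥ x) • u := by
  funext i
  simp [Matrix.mulVec, Matrix.vecMulVec_apply, dotProduct, Finset.mul_sum,
    mul_assoc, mul_comm, mul_left_comm]

/-- Quadratic expansion around a critical point. -/
lemma quad_diff {q : ℕ} (Qj : Matrix (Fin q) (Fin q) ℝ) (hsym : Qjᵀ = Qj)
    (m b b₀ : Fin q → ℝ) (h0 : Qj *ᵥ b₀ = m) :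
    b ⬝ᵥ (Qj *ᵥ b) - 2 * (b ⬝ᵥ m)
      = b₀ ⬝ᵥ (Qj *ᵥ b₀) - 2 * (b₀ ⬝ᵥ m)
        + (b - b₀) ⬝ᵥ (Qj *ᵥ (b - b₀)) := by
  have hcomm : ∀ x y : Fin q → ℝ, x ⬝ᵥ (Qj *ᵥ y) = y ⬝ᵥ (Qj *ᵥ x) := by
    intro x y
    rw [Matrix.dotProduct_mulVec, ← Matrix.mulVec_transpose, hsym,
      dotProduct_comm]
  have h1 : b ⬝ᵥ m = b ⬝ᵥ (Qj *ᵥ b₀) := by rw [h0]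
  have h2 : b₀ ⬝ᵥ m = b₀ ⬝ᵥ (Qj *ᵥ b₀) := by rw [h0]
  have h3 : b₀ ⬝ᵥ (Qj *ᵥ b) = b ⬝ᵥ (Qj *ᵥ b₀) := hcomm b₀ b
  have hexp : (b - b₀) ⬝ᵥ (Qj *ᵥ (b - b₀))
      = b ⬝ᵥ (Qj *ᵥ b) - b ⬝ᵥ (Qj *ᵥ b₀) - b₀ ⬝ᵥ (Qj *ᵥ b)
        + b₀ ⬝ᵥ (Qj *ᵥ b₀) := by
    simp [Matrix.mulVec_sub, sub_dotProduct, dotProduct_sub]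
    ring
  rw [h1, h2, hexp, h3]
  ring

/-- **Leave-one-site-out identity for the penalized least squares smoother.**
Let `Q = ΓᵀΓ + ξJ` and `Q − γ_jγ_jᵀ` be positive definite, `B̂ = AΓQ⁻¹` the full-data fit,
`B̂_(j)` the unique minimizer of the site-`j`-deleted penalized objective, and
`h_jj = γ_jᵀQ⁻¹γ_j`.  Then `h_jj < 1` and
`a_j − B̂_(j)γ_j = (a_j − B̂γ_j)/(1 − h_jj)`. -/
theorem leave_one_out_identity
    {p d q : ℕ} (A : Matrix (Fin p) (Fin d) ℝ) (Γ : Matrix (Fin d) (Fin q) ℝ)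
    (J : Matrix (Fin q) (Fin q) ℝ) (hJ : J.PosSemidef)
    (ξ : ℝ) (hξ : 0 ≤ ξ) (j : Fin d)
    (Q : Matrix (Fin q) (Fin q) ℝ) (hQdef : Q = Γᵀ * Γ + ξ • J)
    (hQ : Q.PosDef) (hQj : (Q - Matrix.vecMulVec (Γ j) (Γ j)).PosDef)
    (Bhat : Matrix (Fin p) (Fin q) ℝ) (hBhat : Bhat = A * Γ * Q⁻¹)
    (Bhatj : Matrix (Fin p) (Fin q) ℝ)
    (hBhatj : ∀ B : Matrix (Fin p) (Fin q) ℝ, B ≠ Bhatj →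
      (∑ k ∈ Finset.univ.erase j, ∑ i : Fin p, (A i k - (Bhatj *ᵥ Γ k) i) ^ 2)
          + ξ * (Bhatjᵀ * Bhatj * J).trace
        < (∑ k ∈ Finset.univ.erase j, ∑ i : Fin p, (A i k - (B *ᵥ Γ k) i) ^ 2)
          + ξ * (Bᵀ * B * J).trace)
    (h : ℝ) (hh : h = Γ j ⬝ᵥ (Q⁻¹ *ᵥ Γ j)) :
    h < 1 ∧
      (fun i : Fin p => A i j) - Bhatj *ᵥ Γ j
        = (1 - h)⁻¹ • ((fun i : Fin p => A i j) - Bhat *ᵥ Γ j) := by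
  set γ : Fin q → ℝ := Γ j with hγ
  set aj : Fin p → ℝ := fun i => A i j with haj
  set Qj : Matrix (Fin q) (Fin q) ℝ := Q - Matrix.vecMulVec γ γ with hQjdef
  -- symmetry facts
  have hJsym : Jᵀ = J := by
    funext i k
    have := congrFun (congrFun hJ.1 i) k
    simpa using this
  have hQsym : Qᵀ = Q := by
    funext i k
    have := congrFun (congrFun hQ.1 i) k
    simpa using this
  have hvmvsym : (Matrix.vecMulVec γ γ)ᵀ = Matrix.vecMulVec γ γ := by
    funext i k
    simp [Matrix.vecMulVec_apply, mul_comm]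
  have hQjsym : Qjᵀ = Qj := by
    rw [hQjdef, Matrix.transpose_sub, hQsym, hvmvsym]
  -- invertibility facts
  have hQdet : IsUnit Q.det := hQ.det_pos.ne'.isUnit
  have hQjdet : IsUnit Qj.det := hQj.det_pos.ne'.isUnit
  -- v = Q⁻¹ γ
  set v : Fin q → ℝ := Q⁻¹ *ᵥ γ with hv
  have hQv : Q *ᵥ v = γ := by
    rw [hv, Matrix.mulVec_mulVec, Matrix.mul_nonsing_inv _ hQdet, Matrix.one_mulVec]
  have hhv : h = γ ⬝ᵥ v := hh
  have hgv : γ ⬝ᵥ v = v ⬝ᵥ γ := dotProduct_comm _ _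
  have hvQv : v ⬝ᵥ (Q *ᵥ v) = h := by rw [hQv, ← hgv, ← hhv]
  have hQjv : Qj *ᵥ v = (1 - h) • γ := by
    rw [hQjdef, Matrix.sub_mulVec, hQv, vmv_mulVec, ← hhv]
    funext i; simp only [Pi.sub_apply, Pi.smul_apply, smul_eq_mul]; ring
  -- h < 1
  have hlt : h < 1 := by
    by_cases hv0 : v = 0
    · have : h = 0 := by rw [hhv, hv0]; simp
      linarith
    · have hpos : 0 < v ⬝ᵥ (Qj *ᵥ v) := by
        have := hQj.dotProduct_mulVec_pos hv0
        simpa [hQjdef] using this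
      have hQpos : 0 < v ⬝ᵥ (Q *ᵥ v) := by
        have := hQ.dotProduct_mulVec_pos hv0
        simpa using this
      have hQpos' : 0 < h := by rwa [hvQv] at hQpos
      have hcalc : v ⬝ᵥ (Qj *ᵥ v) = h - h * h := by
        rw [hQjv, dotProduct_smul, ← hgv, ← hhv, smul_eq_mul]
        ring
      rw [hcalc] at hpos
      nlinarith
  have h1ne : (1 : ℝ) - h ≠ 0 := by linarith
  -- Sherman–Morrison for the inverse applied to γ
  have hQjinvγ : Qj⁻¹ *ᵥ γ = (1 - h)⁻¹ • v := by
    have e1 : Qj *ᵥ ((1 - h)⁻¹ • v) = γ := by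
      rw [Matrix.mulVec_smul, hQjv, smul_smul, inv_mul_cancel₀ h1ne, one_smul]
    calc Qj⁻¹ *ᵥ γ = Qj⁻¹ *ᵥ (Qj *ᵥ ((1 - h)⁻¹ • v)) := by rw [e1]
      _ = (Qj⁻¹ * Qj) *ᵥ ((1 - h)⁻¹ • v) := by rw [Matrix.mulVec_mulVec]
      _ = (1 - h)⁻¹ • v := by rw [Matrix.nonsing_inv_mul _ hQjdet, Matrix.one_mulVec]
  -- the deleted-data normal-equations solution
  set M : Matrix (Fin p) (Fin q) ℝ := A * Γ - Matrix.vecMulVec aj γ with hM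
  set B₀ : Matrix (Fin p) (Fin q) ℝ := M * Qj⁻¹ with hB₀
  have hB₀Qj : B₀ * Qj = M := by
    rw [hB₀, Matrix.nonsing_inv_mul_cancel_right _ _ hQjdet]
  have hQjs : ∀ n m, Qj n m = Qj m n := by
    intro n m
    have := congrFun (congrFun hQjsym m) n
    rw [Matrix.transpose_apply] at this
    exact this
  have hJs : ∀ n m, J n m = J m n := by
    intro n m
    have := congrFun (congrFun hJsym m) n
    rw [Matrix.transpose_apply] at this
    exact this
  have hrow : ∀ i : Fin p, Qj *ᵥ (fun n => B₀ i n) = fun n => M i n := by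
    intro i
    funext n
    have := congrFun (congrFun hB₀Qj i) n
    rw [Matrix.mul_apply] at this
    calc (Qj *ᵥ fun n => B₀ i n) n = ∑ m, Qj n m * B₀ i m := rfl
      _ = ∑ m, B₀ i m * Qj m n := by
          refine Finset.sum_congr rfl fun m _ => ?_
          rw [mul_comm, hQjs n m]
      _ = M i n := this
  -- row of M as a deleted sum
  have hMrow : ∀ (i : Fin p) (n : Fin q),
      M i n = ∑ k ∈ Finset.univ.erase j, A i k * Γ k n := by
    intro i n
    rw [Finset.sum_erase_eq_sub (Finset.mem_univ j)]
    simp [hM, Matrix.mul_apply, Matrix.vecMulVec_apply, haj, hγ]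
  -- objective function in quadratic form
  set f : Matrix (Fin p) (Fin q) ℝ → ℝ := fun B =>
    (∑ k ∈ Finset.univ.erase j, ∑ i : Fin p, (A i k - (B *ᵥ Γ k) i) ^ 2)
      + ξ * (Bᵀ * B * J).trace with hf
  set C : ℝ := ∑ i : Fin p, ∑ k ∈ Finset.univ.erase j, (A i k) ^ 2 with hC
  have htrace : ∀ B : Matrix (Fin p) (Fin q) ℝ,
      (Bᵀ * B * J).trace = ∑ i : Fin p, (fun n => B i n) ⬝ᵥ (J *ᵥ fun n => B i n) := by
    intro B
    calc (Bᵀ * B * J).trace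
        = ∑ n, ∑ m, (∑ i, B i n * B i m) * J m n := by
          simp [Matrix.trace, Matrix.diag, Matrix.mul_apply, Finset.sum_mul]
      _ = ∑ n, ∑ m, ∑ i, B i n * (J n m * B i m) := by
          refine Finset.sum_congr rfl fun n _ => Finset.sum_congr rfl fun m _ => ?_
          rw [Finset.sum_mul]
          refine Finset.sum_congr rfl fun i _ => ?_
          rw [hJs n m]; ring
      _ = ∑ n, ∑ i, ∑ m, B i n * (J n m * B i m) := by
          refine Finset.sum_congr rfl fun n _ => Finset.sum_comm
      _ = ∑ i, ∑ n, ∑ m, B i n * (J n m * B i m) := Finset.sum_comm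
      _ = ∑ i : Fin p, (fun n => B i n) ⬝ᵥ (J *ᵥ fun n => B i n) := by
          refine Finset.sum_congr rfl fun i _ => ?_
          simp [dotProduct, Matrix.mulVec, Finset.mul_sum]
  -- quadratic-form identity for each row
  have hquadform : ∀ (b : Fin q → ℝ),
      b ⬝ᵥ (Qj *ᵥ b)
        = (∑ k ∈ Finset.univ.erase j, (b ⬝ᵥ Γ k) ^ 2) + ξ * (b ⬝ᵥ (J *ᵥ b)) := by
    intro b
    have hQb : Qj *ᵥ b = Γᵀ *ᵥ (Γ *ᵥ b) + ξ • (J *ᵥ b) - (γ ⬝ᵥ b) • γ := by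
      rw [hQjdef, hQdef, Matrix.sub_mulVec, Matrix.add_mulVec, vmv_mulVec,
        ← Matrix.mulVec_mulVec, Matrix.smul_mulVec]
    rw [hQb]
    have e1 : b ⬝ᵥ (Γᵀ *ᵥ (Γ *ᵥ b)) = ∑ k : Fin d, (b ⬝ᵥ Γ k) ^ 2 := by
      rw [Matrix.dotProduct_mulVec, ← Matrix.mulVec_transpose, Matrix.transpose_transpose]
      simp [dotProduct, Matrix.mulVec, sq, mul_comm]
    have e2 : ∑ k ∈ Finset.univ.erase j, (b ⬝ᵥ Γ k) ^ 2
        = (∑ k : Fin d, (b ⬝ᵥ Γ k) ^ 2) - (b ⬝ᵥ γ) ^ 2 := by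
      rw [Finset.sum_erase_eq_sub (Finset.mem_univ j)]
    rw [e2]
    have e3 : b ⬝ᵥ ((γ ⬝ᵥ b) • γ) = (b ⬝ᵥ γ) ^ 2 := by
      rw [dotProduct_smul, smul_eq_mul, dotProduct_comm γ b]
      ring
    simp only [dotProduct_sub, dotProduct_add, dotProduct_smul, e1, e3,
      smul_eq_mul]
    ring
  have hlin : ∀ (i : Fin p) (b : Fin q → ℝ),
      b ⬝ᵥ (fun n => M i n)
        = ∑ k ∈ Finset.univ.erase j, A i k * (b ⬝ᵥ Γ k) := by
    intro i b
    calc b ⬝ᵥ (fun n => M i n)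
        = ∑ n, b n * ∑ k ∈ Finset.univ.erase j, A i k * Γ k n := by
          simp [dotProduct, hMrow]
      _ = ∑ n, ∑ k ∈ Finset.univ.erase j, A i k * (b n * Γ k n) := by
          refine Finset.sum_congr rfl fun n _ => ?_
          rw [Finset.mul_sum]
          exact Finset.sum_congr rfl fun k _ => by ring
      _ = ∑ k ∈ Finset.univ.erase j, ∑ n, A i k * (b n * Γ k n) := Finset.sum_comm
      _ = ∑ k ∈ Finset.univ.erase j, A i k * (b ⬝ᵥ Γ k) := by
          refine Finset.sum_congr rfl fun k _ => ?_
          rw [dotProduct, Finset.mul_sum]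
  -- f in quadratic form
  have hfq : ∀ B : Matrix (Fin p) (Fin q) ℝ,
      f B = C + ∑ i : Fin p,
        ((fun n => B i n) ⬝ᵥ (Qj *ᵥ fun n => B i n)
          - 2 * ((fun n => B i n) ⬝ᵥ (fun n => M i n))) := by
    intro B
    have hBv : ∀ i k, (B *ᵥ Γ k) i = (fun n => B i n) ⬝ᵥ Γ k := fun i k => rfl
    have step1 : f B = ∑ i : Fin p,
        ((∑ k ∈ Finset.univ.erase j, (A i k - (fun n => B i n) ⬝ᵥ Γ k) ^ 2)
          + ξ * ((fun n => B i n) ⬝ᵥ (J *ᵥ fun n => B i n))) := by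
      rw [hf]
      simp only [hBv]
      rw [htrace B, Finset.sum_comm, Finset.mul_sum, ← Finset.sum_add_distrib]
    rw [step1, hC, ← Finset.sum_add_distrib]
    refine Finset.sum_congr rfl fun i _ => ?_
    rw [hquadform, hlin]
    have hsplit : ∑ k ∈ Finset.univ.erase j, (A i k - (fun n => B i n) ⬝ᵥ Γ k) ^ 2
        = (∑ k ∈ Finset.univ.erase j, (A i k) ^ 2)
          + (∑ k ∈ Finset.univ.erase j, ((fun n => B i n) ⬝ᵥ Γ k) ^ 2)
          - 2 * ∑ k ∈ Finset.univ.erase j, A i k * ((fun n => B i n) ⬝ᵥ Γ k) := by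
      rw [← Finset.sum_add_distrib, Finset.mul_sum, ← Finset.sum_sub_distrib]
      exact Finset.sum_congr rfl fun k _ => by ring
    rw [hsplit]
    ring
  -- B₀ minimizes f, hence Bhatj = B₀
  have hmin : f B₀ ≤ f Bhatj := by
    rw [hfq B₀, hfq Bhatj]
    have key : ∀ i : Fin p,
        (fun n => B₀ i n) ⬝ᵥ (Qj *ᵥ fun n => B₀ i n)
            - 2 * ((fun n => B₀ i n) ⬝ᵥ (fun n => M i n))
          ≤ (fun n => Bhatj i n) ⬝ᵥ (Qj *ᵥ fun n => Bhatj i n)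
            - 2 * ((fun n => Bhatj i n) ⬝ᵥ (fun n => M i n)) := by
      intro i
      have hq := quad_diff Qj hQjsym (fun n => M i n)
        (fun n => Bhatj i n) (fun n => B₀ i n) (hrow i)
      have hnn : 0 ≤ ((fun n => Bhatj i n) - fun n => B₀ i n) ⬝ᵥ
          (Qj *ᵥ ((fun n => Bhatj i n) - fun n => B₀ i n)) := by
        have := hQj.posSemidef.dotProduct_mulVec_nonneg ((fun n => Bhatj i n) - fun n => B₀ i n)
        simpa [hQjdef] using this
      linarith
    have := Finset.sum_le_sum (fun i (_ : i ∈ Finset.univ) => key i)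
    linarith
  have hBeq : Bhatj = B₀ := by
    by_contra hne
    have hne' : B₀ ≠ Bhatj := fun e => hne e.symm
    have := hBhatj B₀ hne'
    have hlt' : f Bhatj < f B₀ := this
    linarith
  -- final computation
  refine ⟨hlt, ?_⟩
  have hBγ : Bhatj *ᵥ γ = (1 - h)⁻¹ • (M *ᵥ v) := by
    rw [hBeq, hB₀, ← Matrix.mulVec_mulVec, hQjinvγ, Matrix.mulVec_smul]
  have hMv : M *ᵥ v = Bhat *ᵥ γ - h • aj := by
    rw [hM, Matrix.sub_mulVec, vmv_mulVec, ← hhv, hBhat]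
    have : (A * Γ * Q⁻¹) *ᵥ γ = (A * Γ) *ᵥ (Q⁻¹ *ᵥ γ) := (Matrix.mulVec_mulVec γ (A * Γ) Q⁻¹).symm
    rw [this, ← hv]
  rw [hBγ, hMv]
  funext i
  simp only [Pi.sub_apply, Pi.smul_apply, smul_eq_mul, Pi.add_apply]
  field_simp
  ring
end

section
/- Let Γ ∈ ℝ^{d×q} with rows γ₁ᵀ, …, γ_dᵀ, let S ∈ ℝ^{d×d} be symmetric, let J ∈ ℝ^{q×q} be symmetric positive semidefinite, and let ξ > 0. Let EᵀE = Σ_{j=1}^d (e_je_jᵀ) ⊗ (e_je_jᵀ) where e_j is the j-th canonical vector of ℝ^d, and define Ω = (Γᵀ ⊗ Γᵀ)(I − EᵀE)(Γ ⊗ Γ) + ξ(J ⊗ J). Assume Ω is invertible. Then the matrix Ĉ ∈ ℝ^{q×q} defined by vec(Ĉ) = Ω⁻¹(Γᵀ ⊗ Γᵀ) vec(S − diag S) is symmetric and minimizes, over all symmetric C ∈ ℝ^{q×q}, the objective L(C) = Σ_{j=1}^d Σ_{k≠j} (S_{jk} − γ_jᵀCγ_k)² + ξ tr((CJ)²). 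-/
open Matrix
open scoped Kronecker

/-- Flattening of a matrix into a vector indexed by pairs (the `vec` operation). -/
def matVec {m : Type*} (M : Matrix m m ℝ) : m × m → ℝ := fun p => M p.1 p.2

lemma pls_ete_apply {d : ℕ} (p p' : Fin d × Fin d) :
    (∑ j : Fin d, (single j j (1:ℝ)) ⊗ₖ (single j j (1:ℝ))) p p'
      = if p.1 = p.2 ∧ p'.1 = p.1 ∧ p'.2 = p.1 then 1 else 0 := by
  obtain ⟨j, k⟩ := p; obtain ⟨j', k'⟩ := p'
  simp only [Matrix.sum_apply, kroneckerMap_apply, single, of_apply]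
  by_cases h1 : j = k
  · subst h1
    by_cases h2 : j' = j <;> by_cases h3 : k' = j
    · subst h2; subst h3; simp [Finset.sum_ite_eq]
    all_goals rw [if_neg (by tauto)]
    all_goals exact Finset.sum_eq_zero (fun m _ => by
      by_cases hm : m = j <;> by_cases hm' : m = k' <;> simp_all [hm, hm'] <;> omega)
  · rw [if_neg (by tauto)]
    exact Finset.sum_eq_zero (fun m _ => by
      by_cases h2 : m = j <;> by_cases h3 : m = k <;> simp_all)

lemma pls_rank1_entry {d q : ℕ} (Γ : Matrix (Fin d) (Fin q) ℝ) (j : Fin d) (a a' : Fin q) :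
    (Γᵀ * single j j (1:ℝ) * Γ) a a' = Γ j a * Γ j a' := by
  simp [Matrix.mul_apply, single, ite_and, Finset.sum_ite_eq, transpose_apply]

lemma pls_T_split {d q : ℕ} (Γ : Matrix (Fin d) (Fin q) ℝ) :
    (Γᵀ ⊗ₖ Γᵀ) * (1 - ∑ j : Fin d,
        (single j j (1:ℝ)) ⊗ₖ (single j j (1:ℝ))) * (Γ ⊗ₖ Γ)
      = (Γᵀ*Γ) ⊗ₖ (Γᵀ*Γ)
        - ∑ j : Fin d, ((Γᵀ*single j j (1:ℝ)*Γ) ⊗ₖ (Γᵀ*single j j (1:ℝ)*Γ)) := by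
  rw [Matrix.mul_sub, Matrix.sub_mul, Matrix.mul_one, mul_kronecker_mul,
    Matrix.mul_sum, Matrix.sum_mul]
  congr 1
  refine Finset.sum_congr rfl (fun j _ => ?_)
  rw [mul_kronecker_mul, mul_kronecker_mul]

lemma pls_sum_erase_ite {d : ℕ} (j : Fin d) (f : Fin d → ℝ) :
    (∑ k : Fin d, if j = k then 0 else f k) = ∑ k ∈ Finset.univ.erase j, f k := by
  rw [← Finset.sum_erase (Finset.univ) (f := fun k => if j = k then 0 else f k)
    (a := j) (by simp)]
  exact Finset.sum_congr rfl
    (fun k hk => by rw [if_neg (Ne.symm (Finset.ne_of_mem_erase hk))])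

lemma pls_expand {d : ℕ} (S : Matrix (Fin d) (Fin d) ℝ) (y : Fin d × Fin d → ℝ) :
    (∑ j : Fin d, ∑ k ∈ Finset.univ.erase j, (S j k - y (j, k))^2)
      = (∑ j : Fin d, ∑ k ∈ Finset.univ.erase j, (y (j, k))^2)
        - 2 * (∑ j : Fin d, ∑ k ∈ Finset.univ.erase j, S j k * y (j, k))
        + ∑ j : Fin d, ∑ k ∈ Finset.univ.erase j, (S j k)^2 := by
  rw [Finset.mul_sum, ← Finset.sum_sub_distrib, ← Finset.sum_add_distrib]
  refine Finset.sum_congr rfl (fun j _ => ?_)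
  rw [Finset.mul_sum, ← Finset.sum_sub_distrib, ← Finset.sum_add_distrib]
  exact Finset.sum_congr rfl (fun k _ => by ring)

/-- **Closed form of the penalized least squares covariance smoother.**
With `EᵀE = ∑_j (e_je_jᵀ) ⊗ (e_je_jᵀ)` and
`Ω = (Γᵀ ⊗ Γᵀ)(I − EᵀE)(Γ ⊗ Γ) + ξ(J ⊗ J)` invertible, the matrix `Ĉ` defined by
`vec(Ĉ) = Ω⁻¹(Γᵀ ⊗ Γᵀ) vec(S − diag S)` is symmetric and minimizes
`L(C) = ∑_j ∑_{k ≠ j} (S_{jk} − γ_jᵀCγ_k)² + ξ tr((CJ)²)` over symmetric `C`. -/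
theorem penalized_least_squares_covariance
    {d q : ℕ} (Γ : Matrix (Fin d) (Fin q) ℝ)
    (S : Matrix (Fin d) (Fin d) ℝ) (hS : S.IsSymm)
    (J : Matrix (Fin q) (Fin q) ℝ) (hJ : J.PosSemidef)
    (ξ : ℝ) (hξ : 0 < ξ)
    (EtE : Matrix (Fin d × Fin d) (Fin d × Fin d) ℝ)
    (hEtE : EtE = ∑ j : Fin d,
      (Matrix.single j j (1 : ℝ)) ⊗ₖ (Matrix.single j j (1 : ℝ)))
    (Om : Matrix (Fin q × Fin q) (Fin q × Fin q) ℝ)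
    (hOm : Om = (Γᵀ ⊗ₖ Γᵀ) * (1 - EtE) * (Γ ⊗ₖ Γ) + ξ • (J ⊗ₖ J))
    (hOminv : IsUnit Om)
    (L : Matrix (Fin q) (Fin q) ℝ → ℝ)
    (hL : ∀ C, L C = (∑ j : Fin d, ∑ k ∈ Finset.univ.erase j,
        (S j k - Γ j ⬝ᵥ (C *ᵥ Γ k)) ^ 2) + ξ * ((C * J) ^ 2).trace)
    (Chat : Matrix (Fin q) (Fin q) ℝ)
    (hChat : matVec Chat = (Om⁻¹ * (Γᵀ ⊗ₖ Γᵀ)) *ᵥ matVec (S - Matrix.diagonal S.diag)) :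
    Chat.IsSymm ∧ ∀ C : Matrix (Fin q) (Fin q) ℝ, C.IsSymm → L Chat ≤ L C := by
  classical
  have hdet : IsUnit Om.det := (Matrix.isUnit_iff_isUnit_det Om).mp hOminv
  have hJT : Jᵀ = J := hJ.1.eq
  have hJsym : ∀ a a', J a a' = J a' a := fun a a' => by
    conv_lhs => rw [← hJT]
    rfl
  set s : Fin d × Fin d → ℝ := matVec (S - Matrix.diagonal S.diag) with hsdef
  have hs : ∀ p : Fin d × Fin d, s p = if p.1 = p.2 then 0 else S p.1 p.2 := by
    rintro ⟨j, k⟩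
    by_cases h : j = k <;> simp [hsdef, matVec, Matrix.diagonal, Matrix.diag, h]
  -- Gram matrix symmetry
  have hGram : ∀ a a', (Γᵀ * Γ) a a' = (Γᵀ * Γ) a' a := by
    intro a a'
    simp only [Matrix.mul_apply, transpose_apply]
    exact Finset.sum_congr rfl (fun j _ => mul_comm _ _)
  -- entry formula for Om
  have hOmEntry : ∀ a b a' b' : Fin q, Om (a, b) (a', b')
      = (Γᵀ*Γ) a a' * (Γᵀ*Γ) b b'
        - (∑ j : Fin d, (Γ j a * Γ j a') * (Γ j b * Γ j b'))
        + ξ * (J a a' * J b b') := by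
    intro a b a' b'
    rw [hOm, hEtE, Matrix.add_apply, Matrix.smul_apply, pls_T_split, Matrix.sub_apply,
      Matrix.sum_apply, kroneckerMap_apply, kroneckerMap_apply, smul_eq_mul]
    congr 1
    congr 1
    exact Finset.sum_congr rfl (fun j _ => by
      rw [kroneckerMap_apply, pls_rank1_entry, pls_rank1_entry])
  -- mulVec of (1 - EtE)
  have hMy : ∀ (y : Fin d × Fin d → ℝ) (p : Fin d × Fin d),
      ((1 - EtE) *ᵥ y) p = if p.1 = p.2 then 0 else y p := by
    intro y p
    rw [Matrix.sub_mulVec, Matrix.one_mulVec, Pi.sub_apply]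
    have hE : (EtE *ᵥ y) p = if p.1 = p.2 then y p else 0 := by
      obtain ⟨j, k⟩ := p
      simp only [mulVec, dotProduct, hEtE, pls_ete_apply]
      by_cases h : j = k
      · subst h
        rw [if_pos rfl, Fintype.sum_prod_type]
        simp [ite_and, Finset.sum_ite_eq]
      · rw [if_neg h]
        exact Finset.sum_eq_zero (fun p' _ => by
          rw [if_neg (by simp; tauto), zero_mul])
    rw [hE]
    by_cases h : p.1 = p.2 <;> simp [h]
  -- A *ᵥ matVec C entries
  have hAmul : ∀ (C : Matrix (Fin q) (Fin q) ℝ) (p : Fin d × Fin d),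
      ((Γ ⊗ₖ Γ) *ᵥ matVec C) p = Γ p.1 ⬝ᵥ (C *ᵥ Γ p.2) := by
    intro C p
    simp only [mulVec, dotProduct, Fintype.sum_prod_type, matVec, kroneckerMap_apply]
    refine Finset.sum_congr rfl (fun a _ => ?_)
    rw [Finset.mul_sum]
    exact Finset.sum_congr rfl (fun b _ => by ring)
  -- transpose trick
  have hdotT : ∀ (x : Fin q × Fin q → ℝ) (z : Fin d × Fin d → ℝ),
      x ⬝ᵥ ((Γᵀ ⊗ₖ Γᵀ) *ᵥ z) = ((Γ ⊗ₖ Γ) *ᵥ x) ⬝ᵥ z := by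
    intro x z
    rw [kroneckerMap_transpose, Matrix.dotProduct_mulVec, Matrix.vecMul_transpose]
  -- quadratic form decomposition
  have hOmq : ∀ x : Fin q × Fin q → ℝ,
      x ⬝ᵥ (Om *ᵥ x) = ((Γ ⊗ₖ Γ) *ᵥ x) ⬝ᵥ ((1 - EtE) *ᵥ ((Γ ⊗ₖ Γ) *ᵥ x))
        + ξ * (x ⬝ᵥ ((J ⊗ₖ J) *ᵥ x)) := by
    intro x
    rw [hOm, Matrix.add_mulVec, dotProduct_add, Matrix.smul_mulVec,
      dotProduct_smul, smul_eq_mul]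
    congr 1
    rw [← Matrix.mulVec_mulVec, ← Matrix.mulVec_mulVec, hdotT]
  -- nonnegativity of the J ⊗ J quadratic form
  have hJq : ∀ x : Fin q × Fin q → ℝ, 0 ≤ x ⬝ᵥ ((J ⊗ₖ J) *ᵥ x) := by
    intro x
    obtain ⟨B, hB⟩ : ∃ B : Matrix (Fin q) (Fin q) ℝ, J = Bᴴ * B := by
      open scoped MatrixOrder in exact CStarAlgebra.nonneg_iff_eq_star_mul_self.mp hJ.nonneg
    have hBT : Bᴴ = Bᵀ := by
      ext a b; simp [Matrix.conjTranspose_apply, Matrix.transpose_apply]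
    rw [hB, hBT, mul_kronecker_mul, kroneckerMap_transpose, ← Matrix.mulVec_mulVec,
      Matrix.dotProduct_mulVec, Matrix.vecMul_transpose]
    exact Finset.sum_nonneg (fun p _ => mul_self_nonneg _)
  -- nonnegativity of the M quadratic form
  have hMq : ∀ y : Fin d × Fin d → ℝ, 0 ≤ y ⬝ᵥ ((1 - EtE) *ᵥ y) := by
    intro y
    rw [dotProduct]
    refine Finset.sum_nonneg (fun p _ => ?_)
    rw [hMy]
    by_cases h : p.1 = p.2
    · simp [h]
    · rw [if_neg h]; exact mul_self_nonneg _
  have hOmPSD : ∀ x : Fin q × Fin q → ℝ, 0 ≤ x ⬝ᵥ (Om *ᵥ x) := by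
    intro x
    rw [hOmq]
    exact add_nonneg (hMq _) (mul_nonneg hξ.le (hJq x))
  -- symmetry of Om as a bilinear form
  have hOmT : Omᵀ = Om := by
    ext p p'
    obtain ⟨a, b⟩ := p; obtain ⟨a', b'⟩ := p'
    rw [transpose_apply, hOmEntry, hOmEntry, hGram a a', hGram b b',
      hJsym a a', hJsym b b']
    congr 2
    exact Finset.sum_congr rfl (fun j _ => by ring)
  have hOmbil : ∀ x y : Fin q × Fin q → ℝ, x ⬝ᵥ (Om *ᵥ y) = y ⬝ᵥ (Om *ᵥ x) := by
    intro x y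
    rw [Matrix.dotProduct_mulVec, ← Matrix.mulVec_transpose, hOmT, dotProduct_comm]
  -- Chat equations
  have hChatOm : Om *ᵥ matVec Chat = (Γᵀ ⊗ₖ Γᵀ) *ᵥ s := by
    rw [hChat, Matrix.mulVec_mulVec, ← Matrix.mul_assoc,
      Matrix.mul_nonsing_inv _ hdet, Matrix.one_mul]
  -- symmetry of Chat
  have hssym : ∀ j k : Fin d, s (k, j) = s (j, k) := by
    intro j k
    rw [hs, hs]
    by_cases h : j = k
    · subst h; rfl
    · rw [if_neg h, if_neg (Ne.symm h)]
      exact congrFun (congrFun hS j) k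
  have hvsym : ∀ a b : Fin q,
      ((Γᵀ ⊗ₖ Γᵀ) *ᵥ s) (b, a) = ((Γᵀ ⊗ₖ Γᵀ) *ᵥ s) (a, b) := by
    intro a b
    simp only [mulVec, dotProduct, kroneckerMap_apply, Fintype.sum_prod_type,
      transpose_apply]
    rw [Finset.sum_comm]
    refine Finset.sum_congr rfl (fun j _ => Finset.sum_congr rfl (fun k _ => ?_))
    rw [hssym j k]
    ring
  have hOmswap : ∀ a b a' b' : Fin q, Om (a, b) (b', a') = Om (b, a) (a', b') := by
    intro a b a' b'
    rw [hOmEntry, hOmEntry]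
    congr 1
    · congr 1
      · ring
      · exact Finset.sum_congr rfl (fun j _ => by ring)
    · ring
  have hChatsymm : Chat.IsSymm := by
    have hswap : (Om *ᵥ (fun p : Fin q × Fin q => matVec Chat (p.2, p.1)))
        = Om *ᵥ matVec Chat := by
      funext p
      obtain ⟨a, b⟩ := p
      have h1 : (Om *ᵥ (fun p : Fin q × Fin q => matVec Chat (p.2, p.1))) (a, b)
          = ∑ p' : Fin q × Fin q, Om (a, b) (p'.2, p'.1) * matVec Chat p' := by
        simp only [Matrix.mulVec, dotProduct]
        exact Fintype.sum_bijective Prod.swap Prod.swap_bijective _ _ (fun p' => rfl)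
      rw [h1, hChatOm, ← hvsym a b, ← hChatOm]
      simp only [Matrix.mulVec, dotProduct]
      exact Finset.sum_congr rfl (fun p' _ => by rw [hOmswap a b p'.1 p'.2])
    have h2 : (fun p : Fin q × Fin q => matVec Chat (p.2, p.1)) = matVec Chat := by
      have h3 := congrArg (fun z => Om⁻¹ *ᵥ z) hswap
      simp only [Matrix.mulVec_mulVec] at h3
      rwa [Matrix.nonsing_inv_mul _ hdet, Matrix.one_mulVec, Matrix.one_mulVec] at h3
    ext a b
    exact congrFun h2 (a, b)
  -- trace identity
  have htrace : ∀ C : Matrix (Fin q) (Fin q) ℝ, C.IsSymm →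
      ((C * J) ^ 2).trace = matVec C ⬝ᵥ ((J ⊗ₖ J) *ᵥ matVec C) := by
    intro C hC
    have h1 : (J ⊗ₖ J) *ᵥ matVec C = matVec (J * C * Jᵀ) := by
      funext p
      obtain ⟨a, b⟩ := p
      simp only [Matrix.mulVec, dotProduct, Fintype.sum_prod_type, matVec,
        kroneckerMap_apply, Matrix.mul_apply, transpose_apply]
      rw [Finset.sum_comm]
      refine Finset.sum_congr rfl (fun b' _ => ?_)
      rw [Finset.sum_mul]
      refine Finset.sum_congr rfl (fun a' _ => by ring)
    have h2 : matVec C ⬝ᵥ matVec (J * C * Jᵀ) = (Cᵀ * (J * C * Jᵀ)).trace := by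
      simp only [dotProduct, Fintype.sum_prod_type, matVec, Matrix.trace,
        Matrix.diag, Matrix.mul_apply, transpose_apply]
      rw [Finset.sum_comm]
    rw [h1, h2, hC, hJT, sq]
    simp only [Matrix.mul_assoc]
  -- quadratic expansion of L
  set K0 : ℝ := ∑ j : Fin d, ∑ k ∈ Finset.univ.erase j, (S j k)^2 with hK0
  have hMform : ∀ y : Fin d × Fin d → ℝ,
      y ⬝ᵥ ((1 - EtE) *ᵥ y)
        = ∑ j : Fin d, ∑ k ∈ Finset.univ.erase j, (y (j, k))^2 := by
    intro y
    simp only [dotProduct, Fintype.sum_prod_type]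
    refine Finset.sum_congr rfl (fun j _ => ?_)
    rw [← pls_sum_erase_ite j (fun k => (y (j, k))^2)]
    refine Finset.sum_congr rfl (fun k _ => ?_)
    rw [hMy]
    by_cases h : j = k <;> simp [h, sq]
  have hsform : ∀ y : Fin d × Fin d → ℝ,
      s ⬝ᵥ y = ∑ j : Fin d, ∑ k ∈ Finset.univ.erase j, S j k * y (j, k) := by
    intro y
    simp only [dotProduct, hs, Fintype.sum_prod_type, ite_mul, zero_mul]
    exact Finset.sum_congr rfl (fun j _ => pls_sum_erase_ite j _)
  have hLquad : ∀ C : Matrix (Fin q) (Fin q) ℝ, C.IsSymm →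
      L C = matVec C ⬝ᵥ (Om *ᵥ matVec C)
        - 2 * (matVec C ⬝ᵥ (Om *ᵥ matVec Chat)) + K0 := by
    intro C hC
    rw [hL C, hChatOm]
    have e1 : (∑ j : Fin d, ∑ k ∈ Finset.univ.erase j,
        (S j k - Γ j ⬝ᵥ (C *ᵥ Γ k))^2)
        = ∑ j : Fin d, ∑ k ∈ Finset.univ.erase j,
            (S j k - ((Γ ⊗ₖ Γ) *ᵥ matVec C) (j, k))^2 :=
      Finset.sum_congr rfl (fun j _ => Finset.sum_congr rfl (fun k _ => by
        rw [hAmul C (j, k)]))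
    rw [e1, pls_expand, htrace C hC, ← hMform, ← hsform, hOmq (matVec C),
      hdotT (matVec C) s, dotProduct_comm (((Γ ⊗ₖ Γ) *ᵥ matVec C)) s]
    ring
  refine ⟨hChatsymm, fun C hC => ?_⟩
  rw [hLquad C hC, hLquad Chat hChatsymm]
  have hdiff : (matVec C - matVec Chat) ⬝ᵥ (Om *ᵥ (matVec C - matVec Chat))
      = matVec C ⬝ᵥ (Om *ᵥ matVec C) - 2 * (matVec C ⬝ᵥ (Om *ᵥ matVec Chat))
        + matVec Chat ⬝ᵥ (Om *ᵥ matVec Chat) := by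
    rw [Matrix.mulVec_sub, dotProduct_sub, sub_dotProduct, sub_dotProduct]
    have hb := hOmbil (matVec Chat) (matVec C)
    linarith
  have hpos := hOmPSD (matVec C - matVec Chat)
  rw [hdiff] at hpos
  linarith
end
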